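/- arXiv:1709.02761 — 2 statements merged into one kernel-verified Lean document; each statement's English description precedes it below -/
import Mathlib

section
/- Let F be a finite field of odd characteristic with quadratic character λ, let a ∈ F^×, and let ξ be a multiplicative character of F of exact order 3. Then Σ_{z∈F} ξ(z)·λ(z + a) = −ξ(4a)·λ(a)·j_F(ξ, ξ, ξ). -/
open Finset

/-- The Jacobi sum `j_F(χ₁, χ₂, χ₃) = ∑_{x₁+x₂+x₃=1} χ₁(x₁)·χ₂(x₂)·χ₃(x₃)` attached to three
multiplicative characters of a finite field `F`. -/
noncomputable def jacobiSum₃ {F : Type*} [Field F] [Fintype F] [DecidableEq F]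
    (χ₁ χ₂ χ₃ : MulChar F ℂ) : ℂ :=
  ∑ v ∈ Finset.univ.filter (fun v : F × F × F => v.1 + v.2.1 + v.2.2 = 1),
    χ₁ v.1 * χ₂ v.2.1 * χ₃ v.2.2

/-! The substitution `z = a(u - 1)` turns the sum into `ξ(-a) λ(a) J(λ, ξ)`. Counting square
roots with `λ` and substituting `x = (1 + u) / 2` in `J(ξ, ξ)` gives the duplication formula
`J(λ, ξ) = ξ(4) J(ξ, ξ)`. Summing out one variable of the triple Jacobi sum gives
`j(ξ, ξ, ξ) = J(ξ, ξ²) J(ξ, ξ)`, and `J(ξ, ξ²) = J(ξ, ξ⁻¹) = -ξ(-1)`. -/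

namespace MulChar

theorem apply_eq_one_of_isSquare {F R : Type*} [Field F] [CommRing R] {χ : MulChar F R}
    (hχ : χ ^ 2 = 1) {x : F} (hx : IsSquare x) (hx₀ : x ≠ 0) : χ x = 1 := by
  obtain ⟨c, rfl⟩ := hx
  rw [map_mul, ← sq, ← pow_apply' χ two_ne_zero, hχ,
    one_apply (isUnit_iff_ne_zero.mpr (left_ne_zero_of_mul hx₀))]

variable {F R : Type*} [Field F] [Fintype F] [DecidableEq F] [CommRing R] {χ : MulChar F R}

theorem eq_one_of_apply_nonsquare_eq_one (hχ : χ ^ 2 = 1) {x : F} (hx : ¬IsSquare x)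
    (hχx : χ x = 1) : χ = 1 := by
  have hx₀ : x ≠ 0 := fun h => hx (h ▸ IsSquare.zero)
  refine eq_one_iff.mpr fun y => ?_
  by_cases hy : IsSquare (y : F)
  · exact apply_eq_one_of_isSquare hχ hy y.ne_zero
  · have hxy : IsSquare (x * y) := by
      rw [← quadraticChar_one_iff_isSquare (mul_ne_zero hx₀ y.ne_zero), map_mul,
        quadraticChar_neg_one_iff_not_isSquare.mpr hx,
        quadraticChar_neg_one_iff_not_isSquare.mpr hy, neg_one_mul, neg_neg]
    simpa [hχx] using apply_eq_one_of_isSquare hχ hxy (mul_ne_zero hx₀ y.ne_zero)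

variable [IsDomain R]

theorem apply_eq_quadraticChar_of_orderOf_eq_two (hχ : orderOf χ = 2) (x : F) :
    χ x = quadraticChar F x := by
  have hχ₂ : χ ^ 2 = 1 := hχ ▸ pow_orderOf_eq_one χ
  rcases eq_or_ne x 0 with rfl | hx₀
  · simp
  by_cases hx : IsSquare x
  · simp [apply_eq_one_of_isSquare hχ₂ hx hx₀, (quadraticChar_one_iff_isSquare hx₀).mpr hx]
  · rw [quadraticChar_neg_one_iff_not_isSquare.mpr hx, Int.cast_neg, Int.cast_one]
    have hsq : χ x * χ x = 1 := by
      rw [← sq, ← pow_apply' χ two_ne_zero, hχ₂, one_apply (isUnit_iff_ne_zero.mpr hx₀)]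
    refine (mul_self_eq_one_iff.mp hsq).resolve_left fun h => ?_
    simp [eq_one_of_apply_nonsquare_eq_one hχ₂ hx h] at hχ

theorem sum_comp_sq_eq_of_orderOf_eq_two (hF : ringChar F ≠ 2) (hχ : orderOf χ = 2)
    (f : F → R) :
    ∑ u : F, f (u ^ 2) = ∑ v : F, (1 + χ v) * f v := by
  rw [← sum_fiberwise univ (· ^ 2) (fun u => f (u ^ 2))]
  refine sum_congr rfl fun v _ => ?_
  have hcard := quadraticChar_card_sqrts hF v
  rw [Set.toFinset_ofPred] at hcard
  rw [sum_congr rfl fun u hu => by rw [(mem_filter.mp hu).2], sum_const, nsmul_eq_mul,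
    apply_eq_quadraticChar_of_orderOf_eq_two hχ, ← Int.cast_natCast, hcard, Int.cast_add,
    Int.cast_one, add_comm]

end MulChar

section JacobiSum

variable {F R : Type*} [Field F] [Fintype F] [CommRing R]

theorem sum_apply_mul_apply_add {χ ψ : MulChar F R} {a : F} (ha : a ≠ 0) :
    ∑ z : F, χ z * ψ (z + a) = χ (-a) * ψ a * jacobiSum ψ χ := by
  rw [← (Equiv.mulLeft₀ a ha |>.trans (Equiv.subRight a)).sum_comp (fun z => χ z * ψ (z + a)),
    jacobiSum, mul_sum]
  refine sum_congr rfl fun u _ => ?_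
  rw [Equiv.trans_apply, Equiv.mulLeft₀_apply, Equiv.subRight_apply, sub_add_cancel,
    show a * u - a = -a * (1 - u) by ring, map_mul, map_mul]
  ring

theorem apply_four_mul_jacobiSum_self (hF : ringChar F ≠ 2) (χ : MulChar F R) :
    χ 4 * jacobiSum χ χ = ∑ u : F, χ (1 - u ^ 2) := by
  rw [← (Equiv.mulLeft₀ 2 (Ring.two_ne_zero hF) |>.trans (Equiv.subRight 1)).sum_comp
    (fun u => χ (1 - u ^ 2)), jacobiSum, mul_sum]
  refine sum_congr rfl fun x _ => ?_
  rw [Equiv.trans_apply, Equiv.mulLeft₀_apply, Equiv.subRight_apply,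
    show 1 - (2 * x - 1) ^ 2 = 4 * (x * (1 - x)) by ring, map_mul, map_mul]

variable [IsDomain R]

theorem sum_apply_mul_apply_sub {χ ψ : MulChar F R} (h : χ * ψ ≠ 1) (c : F) :
    ∑ y : F, χ y * ψ (c - y) = (χ * ψ) c * jacobiSum χ ψ := by
  rcases eq_or_ne c 0 with rfl | hc
  · have hy : ∀ y : F, χ y * ψ (0 - y) = ψ (-1) * (χ * ψ) y := fun y => by
      rw [zero_sub, neg_eq_neg_one_mul, map_mul, MulChar.mul_apply]; ring
    rw [sum_congr rfl fun y _ => hy y, ← mul_sum, MulChar.sum_eq_zero_of_ne_one h,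
      MulChar.map_zero, mul_zero, zero_mul]
  rw [← Equiv.sum_comp (Equiv.mulLeft₀ c hc) (fun y => χ y * ψ (c - y)), jacobiSum, mul_sum]
  refine sum_congr rfl fun w _ => ?_
  rw [Equiv.mulLeft₀_apply, show c - c * w = c * (1 - w) by ring, map_mul, map_mul,
    MulChar.mul_apply]
  ring

theorem jacobiSum_eq_apply_four_mul_jacobiSum_self [DecidableEq F] (hF : ringChar F ≠ 2)
    {lam χ : MulChar F R} (hlam : orderOf lam = 2) (hχ : χ ≠ 1) :
    jacobiSum lam χ = χ 4 * jacobiSum χ χ := by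
  have hχ₁ : ∑ v : F, χ (1 - v) = 0 :=
    (Equiv.sum_comp (Equiv.subLeft 1) χ).trans (MulChar.sum_eq_zero_of_ne_one hχ)
  rw [apply_four_mul_jacobiSum_self hF,
    MulChar.sum_comp_sq_eq_of_orderOf_eq_two hF hlam (fun v => χ (1 - v)), jacobiSum]
  simp only [add_mul, one_mul, sum_add_distrib, hχ₁, zero_add]

end JacobiSum

theorem jacobiSum₃_eq_sum_sum {F : Type*} [Field F] [Fintype F] [DecidableEq F]
    (χ₁ χ₂ χ₃ : MulChar F ℂ) :
    jacobiSum₃ χ₁ χ₂ χ₃ = ∑ x : F, χ₁ x * ∑ y : F, χ₂ y * χ₃ (1 - x - y) := by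
  rw [jacobiSum₃, sum_filter, Fintype.sum_prod_type]
  refine sum_congr rfl fun x _ => ?_
  rw [Fintype.sum_prod_type, mul_sum]
  refine sum_congr rfl fun y _ => ?_
  simp only [← eq_sub_iff_add_eq', sum_ite_eq', mem_univ, if_true]
  rw [← sub_sub, mul_assoc]

theorem jacobiSum₃_eq_jacobiSum_mul_jacobiSum {F : Type*} [Field F] [Fintype F] [DecidableEq F]
    {χ₁ χ₂ χ₃ : MulChar F ℂ} (h : χ₂ * χ₃ ≠ 1) :
    jacobiSum₃ χ₁ χ₂ χ₃ = jacobiSum χ₁ (χ₂ * χ₃) * jacobiSum χ₂ χ₃ := by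
  rw [jacobiSum₃_eq_sum_sum, jacobiSum, sum_mul]
  exact sum_congr rfl fun x _ => by rw [sum_apply_mul_apply_sub h, mul_assoc]

/-- Let `F` be a finite field of odd characteristic with quadratic character `λ`, let
`a ∈ F^×`, and let `ξ` be a multiplicative character of `F` of exact order `3`.  Then
`∑_{z ∈ F} ξ(z)·λ(z + a) = −ξ(4a)·λ(a)·j_F(ξ, ξ, ξ)`. -/
theorem charSum_cubicChar_quadChar (F : Type*) [Field F] [Fintype F] [DecidableEq F]
    (hodd : ringChar F ≠ 2)
    (lam : MulChar F ℂ) (hlam : orderOf lam = 2)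
    (a : F) (ha : a ≠ 0)
    (ξ : MulChar F ℂ) (hξ : orderOf ξ = 3) :
    ∑ z : F, ξ z * lam (z + a) = -(ξ (4 * a) * lam a * jacobiSum₃ ξ ξ ξ) := by
  have hξ₁ : ξ ≠ 1 := fun h => by simp [h] at hξ
  have hξξ : ξ * ξ = ξ⁻¹ :=
    eq_inv_of_mul_eq_one_left <| by rw [← pow_three', ← hξ, pow_orderOf_eq_one]
  have hξξ₁ : ξ * ξ ≠ 1 := by rwa [hξξ, inv_ne_one]
  rw [sum_apply_mul_apply_add ha, jacobiSum_eq_apply_four_mul_jacobiSum_self hodd hlam hξ₁,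
    jacobiSum₃_eq_jacobiSum_mul_jacobiSum hξξ₁, hξξ, jacobiSum_nontrivial_inv hξ₁,
    neg_eq_neg_one_mul a, map_mul, map_mul ξ 4]
  ring
end

section
/- Let F be a finite field of characteristic p ≥ 5 with quadratic character λ, and let d ≥ 1 be an integer coprime to |F| with 3 ∣ d. Then Σ_{τ∈F} Σ_{x∈F} λ(x³ + x² − 8·τ^d·x + 16·τ^{2d}) + Σ_{x∈F} λ(x³ + 1/4) = Σ_χ χ(−1)·j_F(χ, χ, χ), where the sum on the right ranges over the nontrivial multiplicative characters χ of F satisfying χ^d = 𝟙 and χ³ ≠ 𝟙. -/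
open Finset

section HessianAux

open scoped Classical

set_option linter.unusedSectionVars false
set_option maxHeartbeats 1000000

variable {F : Type*} [Field F] [Fintype F] [DecidableEq F]
variable (lam : MulChar F ℂ)

lemma lam_ne_one (hlam : orderOf lam = 2) : lam ≠ 1 := by
  intro h
  rw [h, orderOf_one] at hlam
  norm_num at hlam

lemma lam_mul_self (hlam : orderOf lam = 2) {a : F} (ha : a ≠ 0) : lam a * lam a = 1 := by
  have h2 : lam ^ 2 = 1 := by rw [← hlam]; exact pow_orderOf_eq_one lam
  calc lam a * lam a = (lam a) ^ 2 := (sq _).symm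
    _ = (lam ^ 2) a := (MulChar.pow_apply' lam two_ne_zero a).symm
    _ = 1 := by rw [h2]; exact MulChar.one_apply (isUnit_iff_ne_zero.mpr ha)

lemma lam_sq (hlam : orderOf lam = 2) {a : F} (ha : a ≠ 0) : lam (a ^ 2) = 1 := by
  rw [sq, map_mul]; exact lam_mul_self lam hlam ha

lemma lam_neg_of_nonsquare (hlam : orderOf lam = 2) {a : F} (ha : a ≠ 0)
    (h : ∀ y : F, y ^ 2 ≠ a) : lam a = -1 := by
  obtain ⟨g, hg⟩ := IsCyclic.exists_generator (α := Fˣ)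
  obtain ⟨k, hk⟩ : ∃ k : ℕ, ((g : F)) ^ k = a := by
    have := hg (Units.mk0 a ha)
    rw [← mem_powers_iff_mem_zpowers, Submonoid.mem_powers_iff] at this
    obtain ⟨k, hk⟩ := this
    exact ⟨k, by rw [← Units.val_pow_eq_pow_val, hk, Units.val_mk0]⟩
  have hodd : k % 2 = 1 := by
    rcases Nat.mod_two_eq_zero_or_one k with hk2 | hk2
    · exfalso
      obtain ⟨j, hj⟩ := (Nat.even_iff.mpr hk2)
      apply h ((g : F) ^ j)
      rw [← hk, hj, ← two_mul, mul_comm, pow_mul]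
    · exact hk2
  have hga : lam a = (lam (g : F)) ^ k := by rw [← hk, map_pow]
  have hg2 : lam (g : F) * lam (g : F) = 1 := lam_mul_self lam hlam (Units.ne_zero g)
  have hgneg : lam (g : F) = -1 := by
    rcases mul_self_eq_one_iff.mp hg2 with h1 | h1
    · exfalso
      apply lam_ne_one lam hlam
      apply MulChar.ext
      intro b
      obtain ⟨n, hn⟩ : ∃ n : ℕ, g ^ n = b := by
        have := hg b
        rwa [← mem_powers_iff_mem_zpowers, Submonoid.mem_powers_iff] at this
      rw [MulChar.one_apply_coe, ← hn, Units.val_pow_eq_pow_val, map_pow, h1, one_pow]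
    · exact h1
  rw [hga, hgneg, ← Nat.div_add_mod k 2, pow_add, pow_mul, hodd]
  norm_num

lemma count_sqrt (hlam : orderOf lam = 2) (h2 : (2 : F) ≠ 0) (a : F) :
    ∑ y : F, (if y ^ 2 = a then (1 : ℂ) else 0) = 1 + lam a := by
  rcases eq_or_ne a 0 with rfl | ha
  · rw [MulChar.map_zero]
    have h : ∀ y : F, (if y ^ 2 = 0 then (1 : ℂ) else 0) = if y = 0 then 1 else 0 := by
      intro y; simp [pow_eq_zero_iff]
    rw [Finset.sum_congr rfl fun y _ => h y]
    simp
  · by_cases hsq : ∃ y : F, y ^ 2 = a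
    · obtain ⟨y₀, rfl⟩ := hsq
      have hy₀ : y₀ ≠ 0 := by rintro rfl; simp at ha
      have hcond : ∀ y : F, y ^ 2 = y₀ ^ 2 ↔ y = y₀ ∨ y = -y₀ := by
        intro y
        constructor
        · intro hyy
          have h0 : (y - y₀) * (y + y₀) = 0 := by linear_combination hyy
          rcases mul_eq_zero.mp h0 with h' | h'
          · left; linear_combination h'
          · right; linear_combination h'
        · rintro (rfl | rfl) <;> ring
      have hne : y₀ ≠ -y₀ := by
        intro h'
        apply hy₀
        have hh : (2 : F) * y₀ = 0 := by linear_combination h'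
        rcases mul_eq_zero.mp hh with h'' | h''
        · exact absurd h'' h2
        · exact h''
      have h : ∀ y : F, (if y ^ 2 = y₀ ^ 2 then (1 : ℂ) else 0)
          = (if y = y₀ then 1 else 0) + (if y = -y₀ then 1 else 0) := by
        intro y
        by_cases h1 : y = y₀ <;> by_cases h4 : y = -y₀ <;>
          simp_all [hcond]
      rw [Finset.sum_congr rfl fun y _ => h y, Finset.sum_add_distrib,
        lam_sq lam hlam hy₀]
      simp
    · push_neg at hsq
      rw [lam_neg_of_nonsquare lam hlam ha hsq]
      have h : ∀ y : F, (if y ^ 2 = a then (1 : ℂ) else 0) = 0 := by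
        intro y; simp [hsq y]
      rw [Finset.sum_congr rfl fun y _ => h y]
      simp


lemma neZero_exponent_cast (G : Type*) [CommGroup G] [Finite G] :
    NeZero ((Monoid.exponent G : ℕ) : ℂ) :=
  ⟨Nat.cast_ne_zero.mpr Monoid.exponent_ne_zero_of_finite⟩

lemma ortho [Fintype (MulChar F ℂ)] (m : ℕ) (hm : m ≠ 0) (a : F) :
    ∑ χ ∈ Finset.univ.filter (fun χ : MulChar F ℂ => χ ^ m = 1), χ a
      = ∑ u : F, (if u ≠ 0 ∧ u ^ m = a then (1 : ℂ) else 0) := by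
  rcases eq_or_ne a 0 with rfl | ha
  · rw [Finset.sum_congr rfl (fun χ _ => MulChar.map_zero χ)]
    have h : ∀ u : F, (if u ≠ 0 ∧ u ^ m = (0 : F) then (1 : ℂ) else 0) = 0 := fun u => by
      rcases eq_or_ne u 0 with rfl | hu
      · simp
      · simp [pow_ne_zero m hu, hu]
    rw [Finset.sum_congr rfl fun u _ => h u]
    simp
  · have hRHS : ∑ u : F, (if u ≠ 0 ∧ u ^ m = a then (1 : ℂ) else 0)
        = ((Finset.univ.filter (fun u : F => u ≠ 0 ∧ u ^ m = a)).card : ℂ) := by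
      rw [Finset.sum_boole]
    by_cases hex : ∃ u : F, u ≠ 0 ∧ u ^ m = a
    · obtain ⟨u₀, hu0, hu⟩ := hex
      have hLHS : ∀ χ ∈ Finset.univ.filter (fun χ : MulChar F ℂ => χ ^ m = 1), χ a = 1 := by
        intro χ hχ
        rw [Finset.mem_filter] at hχ
        rw [← hu, map_pow, ← MulChar.pow_apply' χ hm, hχ.2,
          MulChar.one_apply (isUnit_iff_ne_zero.mpr hu0)]
      rw [Finset.sum_congr rfl hLHS, hRHS, Finset.sum_const, nsmul_eq_mul, mul_one]
      congr 1
      haveI := neZero_exponent_cast Fˣ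
      obtain ⟨e⟩ := MulChar.mulEquiv_units F ℂ
      have hcard1 : (Finset.univ.filter (fun χ : MulChar F ℂ => χ ^ m = 1)).card
          = (Finset.univ.filter (fun x : Fˣ => x ^ m = 1)).card := by
        apply Finset.card_bij (fun χ _ => e χ)
        · intro χ hχ
          rw [Finset.mem_filter] at hχ ⊢
          exact ⟨Finset.mem_univ _, by rw [← map_pow, hχ.2, map_one]⟩
        · intro χ₁ _ χ₂ _ hh
          exact e.injective hh
        · intro x hx
          rw [Finset.mem_filter] at hx
          refine ⟨e.symm x, ?_, e.apply_symm_apply x⟩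
          rw [Finset.mem_filter]
          refine ⟨Finset.mem_univ _, e.injective ?_⟩
          rw [map_pow, e.apply_symm_apply, map_one, hx.2]
      have hcard2 : (Finset.univ.filter (fun x : Fˣ => x ^ m = 1)).card
          = (Finset.univ.filter (fun u : F => u ≠ 0 ∧ u ^ m = a)).card := by
        refine Finset.card_bij (fun (x : Fˣ) _ => (x.val * u₀)) ?_ ?_ ?_
        · intro x hx
          rw [Finset.mem_filter] at hx ⊢
          refine ⟨Finset.mem_univ _, mul_ne_zero (Units.ne_zero x) hu0, ?_⟩
          rw [mul_pow, ← Units.val_pow_eq_pow_val, hx.2, Units.val_one, one_mul, hu]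
        · intro x₁ _ x₂ _ hh
          exact Units.ext (mul_right_cancel₀ hu0 hh)
        · intro u hu'
          rw [Finset.mem_filter] at hu'
          obtain ⟨-, hu1, hu2⟩ := hu'
          refine ⟨Units.mk0 (u * u₀⁻¹) (mul_ne_zero hu1 (inv_ne_zero hu0)), ?_, ?_⟩
          · rw [Finset.mem_filter]
            refine ⟨Finset.mem_univ _, Units.ext ?_⟩
            rw [Units.val_pow_eq_pow_val, Units.val_mk0, Units.val_one, mul_pow, hu2,
              inv_pow, hu]
            exact mul_inv_cancel₀ (by rw [← hu2]; exact pow_ne_zero m hu1)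
          · simp only [Units.val_mk0]
            field_simp
      rw [hcard1, hcard2]
    · -- no m-th root: both sides vanish
      have hR : (Finset.univ.filter (fun u : F => u ≠ 0 ∧ u ^ m = a)) = ∅ := by
        rw [Finset.filter_eq_empty_iff]
        intro u _
        intro hc
        exact hex ⟨u, hc⟩
      -- construct a character χ₀ with χ₀ ^ m = 1 and χ₀ a ≠ 1
      set Hm : Subgroup Fˣ := (powMonoidHom m : Fˣ →* Fˣ).range with hHm
      have hmk : (QuotientGroup.mk (Units.mk0 a ha) : Fˣ ⧸ Hm) ≠ 1 := by
        intro hq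
        rw [QuotientGroup.eq_one_iff] at hq
        obtain ⟨w, hw⟩ := hq
        apply hex
        refine ⟨(w : F), Units.ne_zero w, ?_⟩
        have := congrArg Units.val hw
        rw [powMonoidHom_apply, Units.val_pow_eq_pow_val, Units.val_mk0] at this
        exact this
      haveI := neZero_exponent_cast (Fˣ ⧸ Hm)
      obtain ⟨φ, hφ⟩ := CommGroup.exists_apply_ne_one_of_hasEnoughRootsOfUnity (Fˣ ⧸ Hm) ℂ hmk
      set ψ : Fˣ →* ℂˣ := φ.comp (QuotientGroup.mk' Hm) with hψ
      set χ₀ : MulChar F ℂ := MulChar.ofUnitHom ψ with hχ₀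
      have hχ₀m : χ₀ ^ m = 1 := by
        apply MulChar.ext
        intro b
        rw [MulChar.pow_apply_coe, MulChar.one_apply_coe, hχ₀, MulChar.ofUnitHom_coe]
        have hb : ψ b ^ m = 1 := by
          rw [hψ]
          simp only [MonoidHom.comp_apply, ← map_pow]
          have : (QuotientGroup.mk' Hm) (b ^ m) = 1 := by
            rw [QuotientGroup.mk'_apply, QuotientGroup.eq_one_iff]
            exact ⟨b, rfl⟩
          rw [this, map_one]
        calc (↑(ψ b) : ℂ) ^ m = ↑(ψ b ^ m) := by rw [Units.val_pow_eq_pow_val]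
          _ = 1 := by rw [hb, Units.val_one]
      have hχ₀a : χ₀ a ≠ 1 := by
        have h1 : χ₀ a = ↑(ψ (Units.mk0 a ha)) := by
          rw [hχ₀]
          exact MulChar.ofUnitHom_coe ψ (Units.mk0 a ha)
        rw [h1]
        intro hc
        exact hφ (Units.ext hc)
      rw [hRHS, hR]
      have key : χ₀ a * (∑ χ ∈ Finset.univ.filter (fun χ : MulChar F ℂ => χ ^ m = 1), χ a)
          = ∑ χ ∈ Finset.univ.filter (fun χ : MulChar F ℂ => χ ^ m = 1), χ a := by
        rw [Finset.mul_sum]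
        apply Finset.sum_nbij' (i := fun χ => χ₀ * χ) (j := fun χ => χ₀⁻¹ * χ)
        · intro χ hχ
          rw [Finset.mem_filter] at hχ ⊢
          exact ⟨Finset.mem_univ _, by rw [mul_pow, hχ₀m, hχ.2, mul_one]⟩
        · intro χ hχ
          rw [Finset.mem_filter] at hχ ⊢
          refine ⟨Finset.mem_univ _, ?_⟩
          rw [mul_pow, hχ.2, mul_one, inv_pow, hχ₀m, inv_one]
        · intro χ _
          rw [← mul_assoc, inv_mul_cancel, one_mul]
        · intro χ _
          rw [← mul_assoc, mul_inv_cancel, one_mul]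
        · intro χ _
          rw [MulChar.mul_apply]
      have := eq_zero_of_mul_eq_self_left hχ₀a key
      rw [this]
      simp

lemma sum_comp_bij (e : F → F) (he : Function.Bijective e) (f : F → ℂ) :
    ∑ y : F, f (e y) = ∑ y : F, f y :=
  Fintype.sum_bijective e he _ f fun _ => rfl

lemma sum_affine (b c : F) (hb : b ≠ 0) (f : F → ℂ) :
    ∑ y : F, f (b * y + c) = ∑ y : F, f y := by
  apply sum_comp_bij
  constructor
  · intro y1 y2 h
    exact mul_left_cancel₀ hb (by linear_combination h)
  · intro w
    exact ⟨b⁻¹ * (w - c), by field_simp; ring⟩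

lemma sum_neg (f : F → ℂ) : ∑ y : F, f (-y) = ∑ y : F, f y :=
  sum_comp_bij _ neg_involutive.bijective f

lemma sum_reflect (c : F) (f : F → ℂ) : ∑ y : F, f (c - y) = ∑ y : F, f y := by
  apply sum_comp_bij
  exact (Function.Involutive.bijective (fun x => by simp : Function.Involutive (fun y : F => c - y)))

lemma sum_nonzero (f : F → ℂ) :
    ∑ x ∈ Finset.univ.filter (fun x : F => x ≠ 0), f x = ∑ x : F, f x - f 0 := by
  rw [eq_sub_iff_add_eq]
  have h : Finset.univ.filter (fun x : F => x ≠ 0) = Finset.univ.erase 0 := by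
    ext x; simp [Finset.mem_erase, and_comm]
  rw [h]
  exact Finset.sum_erase_add Finset.univ f (Finset.mem_univ 0)

lemma sum_split_zero (f : F → ℂ) (c : ℂ) (h0 : f 0 = c) :
    ∑ x : F, f x = ∑ x ∈ Finset.univ.filter (fun x : F => x ≠ 0), f x + c := by
  rw [← h0, sum_nonzero]; ring

lemma sum_nonzero_inv (c : F) (hc : c ≠ 0) (f : F → ℂ) :
    ∑ x ∈ Finset.univ.filter (fun x : F => x ≠ 0), f (c * x⁻¹)
      = ∑ x ∈ Finset.univ.filter (fun x : F => x ≠ 0), f x := by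
  apply Finset.sum_nbij' (i := fun x : F => c * x⁻¹) (j := fun x : F => c * x⁻¹)
  · intro x hx
    rw [Finset.mem_filter] at hx ⊢
    exact ⟨Finset.mem_univ _, mul_ne_zero hc (inv_ne_zero hx.2)⟩
  · intro x hx
    rw [Finset.mem_filter] at hx ⊢
    exact ⟨Finset.mem_univ _, mul_ne_zero hc (inv_ne_zero hx.2)⟩
  · intro x hx
    rw [Finset.mem_filter] at hx
    field_simp
  · intro x hx
    rw [Finset.mem_filter] at hx
    field_simp
  · intro x _
    rfl

lemma sum_lam_linear (hlam : orderOf lam = 2) (c : F) : ∑ t : F, lam (t + c) = 0 := by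
  have h := sum_affine (1 : F) c one_ne_zero (fun t => lam t)
  have h2 : ∀ t : F, lam (1 * t + c) = lam (t + c) := by intro t; rw [one_mul]
  rw [Finset.sum_congr rfl fun t _ => (h2 t).symm, h]
  exact MulChar.sum_eq_zero_of_ne_one (lam_ne_one lam hlam)

lemma sum_lam_cubeshift (hlam : orderOf lam = 2) : ∑ v : F, lam (v ^ 3 + v ^ 2) = -1 := by
  have hpt : ∀ v : F, lam (v ^ 3 + v ^ 2) = lam (v ^ 2) * lam (v + 1) := by
    intro v; rw [← map_mul]; congr 1; ring
  rw [Finset.sum_congr rfl fun v _ => hpt v,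
    sum_split_zero (fun v => lam (v ^ 2) * lam (v + 1)) 0 (by simp [MulChar.map_zero])]
  have hpt2 : ∀ v ∈ Finset.univ.filter (fun v : F => v ≠ 0),
      lam (v ^ 2) * lam (v + 1) = lam (v + 1) := by
    intro v hv
    rw [Finset.mem_filter] at hv
    rw [lam_sq lam hlam hv.2, one_mul]
  rw [Finset.sum_congr rfl hpt2, sum_nonzero (fun v => lam (v + 1)), sum_lam_linear lam hlam]
  simp

lemma conic_inner (hlam : orderOf lam = 2) (h2 : (2 : F) ≠ 0) {x : F} (hx : x ≠ 0) (s : F) :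
    ∑ y : F, (if x * y * (1 - x - y) = s then (1 : ℂ) else 0)
      = 1 + lam (x ^ 2 * (1 - x) ^ 2 - 4 * s * x) := by
  have h4 : (4 : F) ≠ 0 := by
    have h : (4 : F) = 2 * 2 := by norm_num
    rw [h]; exact mul_ne_zero h2 h2
  have hcond : ∀ y : F,
      (x * y * (1 - x - y) = s) ↔ ((-2 * x) * y + x * (1 - x)) ^ 2
        = x ^ 2 * (1 - x) ^ 2 - 4 * s * x := by
    intro y
    constructor
    · intro h
      linear_combination (-4 * x) * h
    · intro h
      have h0 : (4 * x) * (x * y * (1 - x - y) - s) = 0 := by linear_combination -h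
      rcases mul_eq_zero.mp h0 with h' | h'
      · exact absurd h' (mul_ne_zero h4 hx)
      · linear_combination h'
  have hstep : ∀ y : F, (if x * y * (1 - x - y) = s then (1 : ℂ) else 0)
      = if ((-2 * x) * y + x * (1 - x)) ^ 2 = x ^ 2 * (1 - x) ^ 2 - 4 * s * x then 1 else 0 := by
    intro y
    by_cases h : x * y * (1 - x - y) = s
    · rw [if_pos h, if_pos ((hcond y).mp h)]
    · rw [if_neg h, if_neg (fun hc => h ((hcond y).mpr hc))]
  rw [Finset.sum_congr rfl fun y _ => hstep y]
  rw [sum_affine (-2 * x) (x * (1 - x)) (mul_ne_zero (neg_ne_zero.mpr h2) hx)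
      (fun w => if w ^ 2 = x ^ 2 * (1 - x) ^ 2 - 4 * s * x then (1 : ℂ) else 0)]
  exact count_sqrt lam hlam h2 _

lemma conic_count (hlam : orderOf lam = 2) (h2 : (2 : F) ≠ 0) {s : F} (hs : s ≠ 0) :
    ∑ x : F, ∑ y : F, (if x * y * (1 - x - y) = s then (1 : ℂ) else 0)
      = (Fintype.card F : ℂ) - 2 + ∑ v : F, lam (v ^ 3 + v ^ 2 + 8 * s * v + 16 * s ^ 2) := by
  have h4 : (4 : F) ≠ 0 := by
    have h : (4 : F) = 2 * 2 := by norm_num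
    rw [h]; exact mul_ne_zero h2 h2
  have hc : (-(4 * s) : F) ≠ 0 := neg_ne_zero.mpr (mul_ne_zero h4 hs)
  have hinner0 : ∑ y : F, (if (0 : F) * y * (1 - 0 - y) = s then (1 : ℂ) else 0) = 0 := by
    apply Finset.sum_eq_zero
    intro y _
    rw [if_neg]
    intro hcon
    exact hs (by linear_combination -hcon)
  calc ∑ x : F, ∑ y : F, (if x * y * (1 - x - y) = s then (1 : ℂ) else 0)
      = ∑ x ∈ Finset.univ.filter (fun x : F => x ≠ 0),
          (∑ y : F, (if x * y * (1 - x - y) = s then (1 : ℂ) else 0)) + 0 :=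
        sum_split_zero _ 0 hinner0
    _ = ∑ x ∈ Finset.univ.filter (fun x : F => x ≠ 0),
          (1 + lam (x ^ 2 * (1 - x) ^ 2 - 4 * s * x)) := by
        rw [add_zero]
        refine Finset.sum_congr rfl fun x hx => ?_
        exact conic_inner lam hlam h2 (Finset.mem_filter.mp hx).2 s
    _ = (∑ x ∈ Finset.univ.filter (fun x : F => x ≠ 0), (1 : ℂ))
        + ∑ x ∈ Finset.univ.filter (fun x : F => x ≠ 0), lam (x ^ 2 * (1 - x) ^ 2 - 4 * s * x) :=
        Finset.sum_add_distrib
    _ = ((Fintype.card F : ℂ) - 1)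
        + ∑ x ∈ Finset.univ.filter (fun x : F => x ≠ 0), lam (x ^ 2 * (1 - x) ^ 2 - 4 * s * x) := by
        congr 1
        rw [sum_nonzero (fun _ : F => (1 : ℂ))]
        simp [Finset.card_univ]
    _ = ((Fintype.card F : ℂ) - 1)
        + ∑ x ∈ Finset.univ.filter (fun x : F => x ≠ 0),
            lam ((-(4 * s) * x⁻¹) ^ 3 + (-(4 * s) * x⁻¹) ^ 2
              + 8 * s * (-(4 * s) * x⁻¹) + 16 * s ^ 2) := by
        congr 1
        refine Finset.sum_congr rfl fun x hx => ?_
        have hxne : x ≠ 0 := (Finset.mem_filter.mp hx).2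
        have hratio : (-(4 * s) * x⁻¹) ^ 3 + (-(4 * s) * x⁻¹) ^ 2
              + 8 * s * (-(4 * s) * x⁻¹) + 16 * s ^ 2
            = (x ^ 2 * (1 - x) ^ 2 - 4 * s * x) * ((-(4 * s) * x⁻¹) * x⁻¹) ^ 2 := by
          field_simp
          ring
        rw [hratio, map_mul,
          lam_sq lam hlam (mul_ne_zero (mul_ne_zero hc (inv_ne_zero hxne)) (inv_ne_zero hxne)),
          mul_one]
    _ = ((Fintype.card F : ℂ) - 1)
        + ∑ x ∈ Finset.univ.filter (fun x : F => x ≠ 0),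
            lam (x ^ 3 + x ^ 2 + 8 * s * x + 16 * s ^ 2) := by
        congr 1
        exact sum_nonzero_inv (-(4 * s)) hc
          (fun t => lam (t ^ 3 + t ^ 2 + 8 * s * t + 16 * s ^ 2))
    _ = ((Fintype.card F : ℂ) - 1)
        + (∑ v : F, lam (v ^ 3 + v ^ 2 + 8 * s * v + 16 * s ^ 2) - 1) := by
        congr 1
        rw [sum_nonzero (fun t => lam (t ^ 3 + t ^ 2 + 8 * s * t + 16 * s ^ 2))]
        congr 1
        have h0 : (0 : F) ^ 3 + 0 ^ 2 + 8 * s * 0 + 16 * s ^ 2 = (4 * s) ^ 2 := by ring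
        rw [h0, lam_sq lam hlam (mul_ne_zero h4 hs)]
    _ = (Fintype.card F : ℂ) - 2 + ∑ v : F, lam (v ^ 3 + v ^ 2 + 8 * s * v + 16 * s ^ 2) := by
        ring

lemma jacobi_eq (χ : MulChar F ℂ) :
    χ (-1) * jacobiSum₃ χ χ χ = ∑ x : F, ∑ y : F, χ (-(x * y * (1 - x - y))) := by
  rw [jacobiSum₃, Finset.mul_sum, ← Finset.sum_product']
  refine Finset.sum_nbij' (i := fun v : F × F × F => (v.1, v.2.1))
    (j := fun p : F × F => (p.1, p.2, 1 - p.1 - p.2)) ?_ ?_ ?_ ?_ ?_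
  · intro v _
    simp [Finset.mem_product]
  · intro p _
    rw [Finset.mem_filter]
    exact ⟨Finset.mem_univ _, by ring⟩
  · rintro ⟨x, y, z⟩ hv
    rw [Finset.mem_filter] at hv
    have hz : z = 1 - x - y := by linear_combination hv.2
    simp [hz]
  · rintro ⟨x, y⟩ _
    rfl
  · rintro ⟨x, y, z⟩ hv
    rw [Finset.mem_filter] at hv
    have hz : z = 1 - x - y := by linear_combination hv.2
    subst hz
    rw [← map_mul, ← map_mul, ← map_mul]
    congr 1
    ring

lemma char_side [Fintype (MulChar F ℂ)] (hlam : orderOf lam = 2) (h2 : (2 : F) ≠ 0)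
    (m : ℕ) (hm : m ≠ 0) :
    ∑ χ ∈ Finset.univ.filter (fun χ : MulChar F ℂ => χ ^ m = 1), χ (-1) * jacobiSum₃ χ χ χ
      = ((Fintype.card F : ℂ) - 1) * ((Fintype.card F : ℂ) - 2)
        + ∑ u ∈ Finset.univ.filter (fun u : F => u ≠ 0), ∑ v : F,
            lam (v ^ 3 + v ^ 2 - 8 * u ^ m * v + 16 * (u ^ m) ^ 2) := by
  calc ∑ χ ∈ Finset.univ.filter (fun χ : MulChar F ℂ => χ ^ m = 1), χ (-1) * jacobiSum₃ χ χ χ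
      = ∑ χ ∈ Finset.univ.filter (fun χ : MulChar F ℂ => χ ^ m = 1),
          ∑ x : F, ∑ y : F, χ (-(x * y * (1 - x - y))) :=
        Finset.sum_congr rfl fun χ _ => jacobi_eq χ
    _ = ∑ x : F, ∑ χ ∈ Finset.univ.filter (fun χ : MulChar F ℂ => χ ^ m = 1),
          ∑ y : F, χ (-(x * y * (1 - x - y))) := Finset.sum_comm
    _ = ∑ x : F, ∑ y : F, ∑ χ ∈ Finset.univ.filter (fun χ : MulChar F ℂ => χ ^ m = 1),
          χ (-(x * y * (1 - x - y))) := Finset.sum_congr rfl fun x _ => Finset.sum_comm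
    _ = ∑ x : F, ∑ y : F, ∑ u : F,
          (if u ≠ 0 ∧ u ^ m = -(x * y * (1 - x - y)) then (1 : ℂ) else 0) :=
        Finset.sum_congr rfl fun x _ => Finset.sum_congr rfl fun y _ => ortho m hm _
    _ = ∑ x : F, ∑ u : F, ∑ y : F,
          (if u ≠ 0 ∧ u ^ m = -(x * y * (1 - x - y)) then (1 : ℂ) else 0) :=
        Finset.sum_congr rfl fun x _ => Finset.sum_comm
    _ = ∑ u : F, ∑ x : F, ∑ y : F,
          (if u ≠ 0 ∧ u ^ m = -(x * y * (1 - x - y)) then (1 : ℂ) else 0) := Finset.sum_comm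
    _ = ∑ u ∈ Finset.univ.filter (fun u : F => u ≠ 0), (∑ x : F, ∑ y : F,
          (if u ≠ 0 ∧ u ^ m = -(x * y * (1 - x - y)) then (1 : ℂ) else 0)) + 0 := by
        refine sum_split_zero _ 0 ?_
        refine Finset.sum_eq_zero fun x _ => Finset.sum_eq_zero fun y _ => ?_
        rw [if_neg]
        rintro ⟨h0, -⟩
        exact h0 rfl
    _ = ∑ u ∈ Finset.univ.filter (fun u : F => u ≠ 0),
          ((Fintype.card F : ℂ) - 2 + ∑ v : F,
            lam (v ^ 3 + v ^ 2 - 8 * u ^ m * v + 16 * (u ^ m) ^ 2)) := by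
        rw [add_zero]
        refine Finset.sum_congr rfl fun u hu => ?_
        have hu0 : u ≠ 0 := (Finset.mem_filter.mp hu).2
        have hs : (-(u ^ m) : F) ≠ 0 := neg_ne_zero.mpr (pow_ne_zero m hu0)
        have hiff : ∀ x y : F, (u ≠ 0 ∧ u ^ m = -(x * y * (1 - x - y)))
            ↔ (x * y * (1 - x - y) = -(u ^ m)) := by
          intro x y
          constructor
          · rintro ⟨-, h⟩
            linear_combination h
          · intro h
            exact ⟨hu0, by linear_combination h⟩
        have hstep : ∀ x y : F, (if u ≠ 0 ∧ u ^ m = -(x * y * (1 - x - y)) then (1 : ℂ) else 0)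
            = if x * y * (1 - x - y) = -(u ^ m) then 1 else 0 := by
          intro x y
          by_cases h : x * y * (1 - x - y) = -(u ^ m)
          · rw [if_pos h, if_pos ((hiff x y).mpr h)]
          · rw [if_neg h, if_neg (fun hc => h ((hiff x y).mp hc))]
        rw [Finset.sum_congr rfl fun x _ => Finset.sum_congr rfl fun y _ => hstep x y,
          conic_count lam hlam h2 hs]
        congr 1
        refine Finset.sum_congr rfl fun v _ => ?_
        congr 1
        ring
    _ = (∑ u ∈ Finset.univ.filter (fun u : F => u ≠ 0), ((Fintype.card F : ℂ) - 2))
        + ∑ u ∈ Finset.univ.filter (fun u : F => u ≠ 0), ∑ v : F,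
            lam (v ^ 3 + v ^ 2 - 8 * u ^ m * v + 16 * (u ^ m) ^ 2) := Finset.sum_add_distrib
    _ = ((Fintype.card F : ℂ) - 1) * ((Fintype.card F : ℂ) - 2)
        + ∑ u ∈ Finset.univ.filter (fun u : F => u ≠ 0), ∑ v : F,
            lam (v ^ 3 + v ^ 2 - 8 * u ^ m * v + 16 * (u ^ m) ^ 2) := by
        congr 1
        rw [sum_nonzero (fun _ : F => (Fintype.card F : ℂ) - 2)]
        rw [Finset.sum_const, Finset.card_univ, nsmul_eq_mul]
        ring

lemma jacobi_one :
    (1 : MulChar F ℂ) (-1) * jacobiSum₃ (1 : MulChar F ℂ) 1 1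
      = ((Fintype.card F : ℂ) - 1) * ((Fintype.card F : ℂ) - 2) + 1 := by
  rw [jacobi_eq]
  have hterm : ∀ x y : F, (1 : MulChar F ℂ) (-(x * y * (1 - x - y)))
      = if x * y * (1 - x - y) = 0 then 0 else 1 := by
    intro x y
    rcases eq_or_ne (x * y * (1 - x - y)) 0 with h | h
    · rw [if_pos h, h, neg_zero, MulChar.map_zero]
    · rw [if_neg h, MulChar.one_apply (isUnit_iff_ne_zero.mpr (neg_ne_zero.mpr h))]
  have hin0 : ∑ y : F, (if (0 : F) * y * (1 - 0 - y) = 0 then (0 : ℂ) else 1) = 0 := by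
    refine Finset.sum_eq_zero fun y _ => ?_
    rw [if_pos (by ring)]
  have hin : ∀ x : F, x ≠ 0 →
      ∑ y : F, (if x * y * (1 - x - y) = 0 then (0 : ℂ) else 1)
        = ((Fintype.card F : ℂ) - 2) + (if x = 1 then 1 else 0) := by
    intro x hx0
    by_cases hx1 : x = 1
    · subst hx1
      rw [if_pos rfl]
      have hpt : ∀ y : F, (if (1 : F) * y * (1 - 1 - y) = 0 then (0 : ℂ) else 1)
          = 1 - (if y = 0 then 1 else 0) := by
        intro y
        by_cases h0 : y = 0
        · have hc1 : (1 : F) * y * (1 - 1 - y) = 0 := by rw [h0]; ring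
          rw [if_pos hc1, if_pos h0]; ring
        · have hc1 : ¬ ((1 : F) * y * (1 - 1 - y) = 0) := by
            intro hc
            rcases mul_eq_zero.mp hc with h' | h'
            · rcases mul_eq_zero.mp h' with h'' | h''
              · exact one_ne_zero h''
              · exact h0 h''
            · exact h0 (by linear_combination -h')
          rw [if_neg hc1, if_neg h0]
          ring
      rw [Finset.sum_congr rfl fun y _ => hpt y, Finset.sum_sub_distrib,
        Finset.sum_const, Finset.card_univ, nsmul_eq_mul]
      simp
      ring
    · rw [if_neg hx1]
      have h1x : (1 : F) - x ≠ 0 := fun hc => hx1 (by linear_combination -hc)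
      have hpt : ∀ y : F, (if x * y * (1 - x - y) = 0 then (0 : ℂ) else 1)
          = 1 - (if y = 0 then 1 else 0) - (if y = 1 - x then 1 else 0) := by
        intro y
        by_cases h0 : y = 0
        · have hc1 : x * y * (1 - x - y) = 0 := by rw [h0]; ring
          have hc2 : ¬ (y = 1 - x) := by rw [h0]; exact fun hc => h1x hc.symm
          rw [if_pos hc1, if_pos h0, if_neg hc2]
          ring
        · by_cases h1 : y = 1 - x
          · have hc1 : x * y * (1 - x - y) = 0 := by rw [h1]; ring
            rw [if_pos hc1, if_neg h0, if_pos h1]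
            ring
          · have hc1 : ¬ (x * y * (1 - x - y) = 0) := by
              intro hc
              rcases mul_eq_zero.mp hc with h' | h'
              · rcases mul_eq_zero.mp h' with h'' | h''
                · exact hx0 h''
                · exact h0 h''
              · exact h1 (by linear_combination -h')
            rw [if_neg hc1, if_neg h0, if_neg h1]
            ring
      rw [Finset.sum_congr rfl fun y _ => hpt y, Finset.sum_sub_distrib, Finset.sum_sub_distrib,
        Finset.sum_const, Finset.card_univ, nsmul_eq_mul]
      simp
      ring
  calc ∑ x : F, ∑ y : F, (1 : MulChar F ℂ) (-(x * y * (1 - x - y)))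
      = ∑ x : F, ∑ y : F, (if x * y * (1 - x - y) = 0 then (0 : ℂ) else 1) :=
        Finset.sum_congr rfl fun x _ => Finset.sum_congr rfl fun y _ => hterm x y
    _ = ∑ x ∈ Finset.univ.filter (fun x : F => x ≠ 0),
          (∑ y : F, (if x * y * (1 - x - y) = 0 then (0 : ℂ) else 1)) + 0 :=
        sum_split_zero _ 0 hin0
    _ = ∑ x ∈ Finset.univ.filter (fun x : F => x ≠ 0),
          (((Fintype.card F : ℂ) - 2) + (if x = 1 then 1 else 0)) := by
        rw [add_zero]
        exact Finset.sum_congr rfl fun x hx => hin x (Finset.mem_filter.mp hx).2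
    _ = (∑ x ∈ Finset.univ.filter (fun x : F => x ≠ 0), ((Fintype.card F : ℂ) - 2))
        + ∑ x ∈ Finset.univ.filter (fun x : F => x ≠ 0), (if x = 1 then (1 : ℂ) else 0) :=
        Finset.sum_add_distrib
    _ = ((Fintype.card F : ℂ) - 1) * ((Fintype.card F : ℂ) - 2) + 1 := by
        rw [sum_nonzero (fun _ : F => (Fintype.card F : ℂ) - 2), Finset.sum_const,
          Finset.card_univ, nsmul_eq_mul]
        rw [Finset.sum_ite_eq' (Finset.univ.filter (fun x : F => x ≠ 0)) 1 (fun _ => (1 : ℂ))]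
        rw [if_pos (by rw [Finset.mem_filter]; exact ⟨Finset.mem_univ _, one_ne_zero⟩)]
        ring

lemma sum_scale (b : F) (hb : b ≠ 0) (f : F → ℂ) :
    ∑ y : F, f (b * y) = ∑ y : F, f y := by
  have h := sum_affine b 0 hb f
  rw [← h]
  exact Finset.sum_congr rfl fun y _ => by rw [add_zero]

lemma chi_neg_one (χ : MulChar F ℂ) (hχ3 : χ ^ 3 = 1) : χ (-1) = 1 := by
  have ha : χ (-1) * χ (-1) = 1 := by
    rw [← map_mul, neg_mul_neg, one_mul, map_one]
  have h3 : χ (-1) ^ 3 = 1 := by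
    rw [← MulChar.pow_apply' χ (by norm_num : (3 : ℕ) ≠ 0), hχ3,
      MulChar.one_apply (isUnit_one.neg)]
  calc χ (-1) = χ (-1) * (χ (-1) * χ (-1)) := by rw [ha, mul_one]
    _ = χ (-1) ^ 3 := by ring
    _ = 1 := h3

lemma chi_sq_ne_one (χ : MulChar F ℂ) (hχ3 : χ ^ 3 = 1) (hχ : χ ≠ 1) : χ ^ 2 ≠ 1 := by
  intro h
  apply hχ
  calc χ = χ ^ 3 * (χ ^ 2)⁻¹ := by group
    _ = 1 := by rw [hχ3, h]; group

lemma chi_pow_three (χ : MulChar F ℂ) (hχ3 : χ ^ 3 = 1) {w : F} (hw : w ≠ 0) :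
    χ w * (χ w * χ w) = 1 := by
  have h : χ w ^ 3 = 1 := by
    rw [← MulChar.pow_apply' χ (by norm_num : (3 : ℕ) ≠ 0), hχ3,
      MulChar.one_apply (isUnit_iff_ne_zero.mpr hw)]
  calc χ w * (χ w * χ w) = χ w ^ 3 := by ring
    _ = 1 := h

lemma cubic_char_identity (hlam : orderOf lam = 2) (h2 : (2 : F) ≠ 0)
    (χ : MulChar F ℂ) (hχ3 : χ ^ 3 = 1) (hχ : χ ≠ 1) :
    χ (-1) * jacobiSum₃ χ χ χ = - ∑ t : F, χ t * lam (t + 1 / 4) := by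
  have hχ2 := chi_sq_ne_one χ hχ3 hχ
  have h4 : (4 : F) ≠ 0 := by
    have h' : (4 : F) = 2 * 2 := by norm_num
    rw [h']; exact mul_ne_zero h2 h2
  set J : ℂ := ∑ w : F, χ w * χ (1 - w) with hJ
  have hA0 : χ (-1) * jacobiSum₃ χ χ χ = ∑ x : F, ∑ y : F, χ (x * y * (1 - x - y)) := by
    rw [jacobi_eq]
    refine Finset.sum_congr rfl fun x _ => Finset.sum_congr rfl fun y _ => ?_
    rw [show (-(x * y * (1 - x - y))) = (-1) * (x * y * (1 - x - y)) by ring, map_mul,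
      chi_neg_one χ hχ3, one_mul]
  have hA1 : ∀ x : F, ∑ y : F, χ (x * y * (1 - x - y)) = ∑ w : F, χ (x * (w - x) * (1 - w)) := by
    intro x
    rw [← sum_affine (1 : F) x one_ne_zero (fun w => χ (x * (w - x) * (1 - w)))]
    refine Finset.sum_congr rfl fun y _ => ?_
    congr 1
    ring
  have hinner : ∀ w : F, ∑ x : F, χ (x * (w - x) * (1 - w))
      = ((χ w * χ w) * χ (1 - w)) * J := by
    intro w
    rcases eq_or_ne w 0 with rfl | hw
    · have hz : ∀ x : F, χ (x * (0 - x) * (1 - 0)) = (χ ^ 2) x := by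
        intro x
        rw [show x * (0 - x) * (1 - 0) = (-1) * (x * x) by ring, map_mul, map_mul,
          chi_neg_one χ hχ3, one_mul, MulChar.pow_apply' χ two_ne_zero, sq]
      rw [Finset.sum_congr rfl fun x _ => hz x, MulChar.sum_eq_zero_of_ne_one hχ2]
      simp [MulChar.map_zero]
    · rw [← sum_scale w hw (fun x => χ (x * (w - x) * (1 - w))), hJ, Finset.mul_sum]
      refine Finset.sum_congr rfl fun a _ => ?_
      rw [show (w * a) * (w - w * a) * (1 - w) = (w * w) * ((1 - w) * (a * (1 - a))) by ring,
        map_mul, map_mul, map_mul, map_mul]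
      ring
  have hA : χ (-1) * jacobiSum₃ χ χ χ = (∑ w : F, ((χ w * χ w) * χ (1 - w))) * J := by
    rw [hA0, Finset.sum_congr rfl fun x _ => hA1 x, Finset.sum_comm,
      Finset.sum_congr rfl fun w _ => hinner w, ← Finset.sum_mul]
  have hB : ∑ w : F, (χ w * χ w) * χ (1 - w) = -1 := by
    have hvan : ∀ w ∈ Finset.univ, w ∉ Finset.univ.filter (fun w : F => w ≠ 0 ∧ w ≠ 1) →
        (χ w * χ w) * χ (1 - w) = 0 := by
      intro w _ hw
      rw [Finset.mem_filter] at hw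
      push_neg at hw
      rcases eq_or_ne w 0 with rfl | hw0
      · simp [MulChar.map_zero]
      · have hw1 : w = 1 := hw (Finset.mem_univ _) hw0
        rw [hw1]
        simp [MulChar.map_zero]
    rw [← Finset.sum_subset (Finset.filter_subset _ _) hvan]
    have hpt : ∀ w ∈ Finset.univ.filter (fun w : F => w ≠ 0 ∧ w ≠ 1),
        (χ w * χ w) * χ (1 - w) = χ (w⁻¹ - 1) := by
      intro w hw
      obtain ⟨hw0, hw1⟩ := (Finset.mem_filter.mp hw).2
      have h3 := chi_pow_three χ hχ3 hw0
      have hne : χ w ≠ 0 := by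
        intro hc
        rw [hc, zero_mul] at h3
        exact zero_ne_one h3
      have harg : w⁻¹ - 1 = w⁻¹ * (1 - w) := by field_simp
      have hinv : χ w⁻¹ = χ w * χ w := by
        apply mul_right_cancel₀ hne
        rw [← map_mul, inv_mul_cancel₀ hw0, map_one]
        linear_combination -h3
      rw [harg, map_mul, hinv]
    rw [Finset.sum_congr rfl hpt]
    have hre : ∑ w ∈ Finset.univ.filter (fun w : F => w ≠ 0 ∧ w ≠ 1), χ (w⁻¹ - 1)
        = ∑ v ∈ Finset.univ.filter (fun v : F => v ≠ 0 ∧ v ≠ -1), χ v := by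
      refine Finset.sum_nbij' (i := fun w => w⁻¹ - 1) (j := fun v => (v + 1)⁻¹) ?_ ?_ ?_ ?_ ?_
      · intro w hw
        obtain ⟨hw0, hw1⟩ := (Finset.mem_filter.mp hw).2
        rw [Finset.mem_filter]
        refine ⟨Finset.mem_univ _, ?_, ?_⟩
        · intro hc
          apply hw1
          have h' : w⁻¹ = 1 := by linear_combination hc
          rwa [inv_eq_one] at h'
        · intro hc
          have h' : w⁻¹ = 0 := by linear_combination hc
          exact inv_ne_zero hw0 h'
      · intro v hv
        obtain ⟨hv0, hv1⟩ := (Finset.mem_filter.mp hv).2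
        have hv1' : v + 1 ≠ 0 := fun hc => hv1 (by linear_combination hc)
        rw [Finset.mem_filter]
        refine ⟨Finset.mem_univ _, inv_ne_zero hv1', ?_⟩
        intro hc
        apply hv0
        have hc' : (v + 1)⁻¹ = 1 := hc
        rw [inv_eq_one] at hc'
        linear_combination hc'
      · intro w hw
        obtain ⟨hw0, hw1⟩ := (Finset.mem_filter.mp hw).2
        field_simp
        ring
      · intro v hv
        obtain ⟨hv0, hv1⟩ := (Finset.mem_filter.mp hv).2
        have hv1' : v + 1 ≠ 0 := fun hc => hv1 (by linear_combination hc)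
        field_simp
        ring
      · intro w _
        rfl
    rw [hre]
    have hset : Finset.univ.filter (fun v : F => v ≠ 0 ∧ v ≠ -1)
        = (Finset.univ.erase (-1)).erase 0 := by
      ext v
      simp [Finset.mem_erase, and_comm]
    rw [hset]
    have h0mem : (0 : F) ∈ Finset.univ.erase (-1) := by
      rw [Finset.mem_erase]
      exact ⟨fun hc => one_ne_zero (by linear_combination hc : (1 : F) = 0), Finset.mem_univ _⟩
    have e1 := Finset.sum_erase_add (Finset.univ.erase (-1)) (fun v => χ v) h0mem
    have e2 := Finset.sum_erase_add Finset.univ (fun v => χ v) (Finset.mem_univ (-1 : F))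
    have e3 : ∑ v : F, χ v = 0 := MulChar.sum_eq_zero_of_ne_one hχ
    have e4 : χ (0 : F) = 0 := MulChar.map_zero χ
    have e5 : χ (-1 : F) = 1 := chi_neg_one χ hχ3
    simp only [e3, e4, e5] at e1 e2
    linear_combination e1 + e2
  have hC : J = ∑ t : F, lam t * χ (1 / 4 - t) := by
    have j1 : J = ∑ x : F, χ (x * (1 - x)) := by
      rw [hJ]
      exact Finset.sum_congr rfl fun x _ => (map_mul χ _ _).symm
    have j2 : ∑ x : F, χ (x * (1 - x)) = ∑ y : F, χ (1 / 4 - y ^ 2) := by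
      rw [← sum_affine (1 : F) (1 / 2 : F) one_ne_zero (fun x => χ (x * (1 - x)))]
      refine Finset.sum_congr rfl fun y _ => ?_
      congr 1
      field_simp
      ring
    have j3 : ∑ y : F, χ (1 / 4 - y ^ 2)
        = ∑ t : F, (∑ y : F, if y ^ 2 = t then (1 : ℂ) else 0) * χ (1 / 4 - t) := by
      have hswap : ∀ t : F, (∑ y : F, if y ^ 2 = t then (1 : ℂ) else 0) * χ (1 / 4 - t)
          = ∑ y : F, (if y ^ 2 = t then χ (1 / 4 - t) else 0) := by
        intro t
        rw [Finset.sum_mul]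
        refine Finset.sum_congr rfl fun y _ => ?_
        split_ifs <;> simp
      rw [Finset.sum_congr rfl fun t _ => hswap t, Finset.sum_comm]
      refine Finset.sum_congr rfl fun y _ => ?_
      have : ∀ t : F, (if y ^ 2 = t then χ (1 / 4 - t) else 0)
          = if y ^ 2 = t then χ (1 / 4 - y ^ 2) else 0 := by
        intro t
        by_cases h : y ^ 2 = t
        · rw [if_pos h, if_pos h, h]
        · rw [if_neg h, if_neg h]
      rw [Finset.sum_congr rfl fun t _ => this t, Finset.sum_ite_eq Finset.univ (y ^ 2)
        (fun _ => χ (1 / 4 - y ^ 2)), if_pos (Finset.mem_univ _)]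
    have j4 : ∑ t : F, (∑ y : F, if y ^ 2 = t then (1 : ℂ) else 0) * χ (1 / 4 - t)
        = ∑ t : F, (1 + lam t) * χ (1 / 4 - t) := by
      refine Finset.sum_congr rfl fun t _ => ?_
      rw [count_sqrt lam hlam h2]
    have j5 : ∑ t : F, χ (1 / 4 - t) = 0 := by
      rw [sum_reflect (1 / 4 : F) (fun t => χ t)]
      exact MulChar.sum_eq_zero_of_ne_one hχ
    rw [j1, j2, j3, j4]
    have : ∀ t : F, (1 + lam t) * χ (1 / 4 - t)
        = χ (1 / 4 - t) + lam t * χ (1 / 4 - t) := by intro t; ring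
    rw [Finset.sum_congr rfl fun t _ => this t, Finset.sum_add_distrib, j5, zero_add]
  have hD : ∑ t : F, χ t * lam (t + 1 / 4) = ∑ t : F, lam t * χ (1 / 4 - t) := by
    have d1 : ∑ t : F, χ t * lam (t + 1 / 4) = ∑ t : F, χ t * lam (1 / 4 - t) := by
      rw [← sum_neg (fun t => χ t * lam (t + 1 / 4))]
      refine Finset.sum_congr rfl fun t _ => ?_
      have hc : χ (-t) = χ t := by
        rw [show (-t : F) = (-1) * t by ring, map_mul, chi_neg_one χ hχ3, one_mul]
      rw [hc]
      congr 2
      ring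
    have d2 : ∑ t : F, lam t * χ (1 / 4 - t) = ∑ t : F, lam (1 / 4 - t) * χ t := by
      rw [← sum_reflect (1 / 4 : F) (fun t => lam t * χ (1 / 4 - t))]
      refine Finset.sum_congr rfl fun t _ => ?_
      congr 2
      ring
    rw [d1, d2]
    exact Finset.sum_congr rfl fun t _ => mul_comm _ _
  rw [hA, hB, hC, ← hD]
  ring

lemma cube_sum [Fintype (MulChar F ℂ)] (hlam : orderOf lam = 2) (h2 : (2 : F) ≠ 0) :
    ∑ x : F, lam (x ^ 3 + 1 / 4)
      = ∑ χ ∈ Finset.univ.filter (fun χ : MulChar F ℂ => χ ^ 3 = 1 ∧ χ ≠ 1),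
          ∑ t : F, χ t * lam (t + 1 / 4) := by
  have h12 : (1 / 2 : F) ≠ 0 := by
    rw [one_div]
    exact inv_ne_zero h2
  have h14 : lam ((1 : F) / 4) = 1 := by
    have h' : ((1 : F) / 4) = (1 / 2 : F) ^ 2 := by
      rw [div_pow, one_pow]
      norm_num
    rw [h', lam_sq lam hlam h12]
  have h14' : lam ((0 : F) ^ 3 + 1 / 4) = 1 := by
    rw [show ((0 : F) ^ 3 + 1 / 4) = (1 : F) / 4 by ring, h14]
  -- step 1
  have s1 : ∑ x : F, lam (x ^ 3 + 1 / 4)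
      = (∑ u : F, (if u ≠ 0 then lam (u ^ 3 + 1 / 4) else 0)) + 1 := by
    rw [sum_split_zero (fun x : F => lam (x ^ 3 + 1 / 4)) 1 h14']
    congr 1
    rw [Finset.sum_filter]
  -- step 2
  have s2 : ∀ u : F, (if u ≠ 0 then lam (u ^ 3 + 1 / 4) else 0)
      = ∑ t : F, (if u ≠ 0 ∧ u ^ 3 = t then (1 : ℂ) else 0) * lam (t + 1 / 4) := by
    intro u
    by_cases hu : u ≠ 0
    · rw [if_pos hu]
      have hpt : ∀ t : F, (if u ≠ 0 ∧ u ^ 3 = t then (1 : ℂ) else 0) * lam (t + 1 / 4)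
          = if u ^ 3 = t then lam (u ^ 3 + 1 / 4) else 0 := by
        intro t
        by_cases h : u ^ 3 = t
        · rw [if_pos ⟨hu, h⟩, if_pos h, one_mul, h]
        · rw [if_neg (fun hc => h hc.2), if_neg h, zero_mul]
      rw [Finset.sum_congr rfl fun t _ => hpt t,
        Finset.sum_ite_eq Finset.univ (u ^ 3) (fun _ => lam (u ^ 3 + 1 / 4)),
        if_pos (Finset.mem_univ _)]
    · rw [if_neg hu]
      symm
      refine Finset.sum_eq_zero fun t _ => ?_
      rw [if_neg (fun hc => hu hc.1), zero_mul]
  -- step 3/4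
  have s3 : (∑ u : F, (if u ≠ 0 then lam (u ^ 3 + 1 / 4) else 0))
      = ∑ χ ∈ Finset.univ.filter (fun χ : MulChar F ℂ => χ ^ 3 = 1),
          ∑ t : F, χ t * lam (t + 1 / 4) := by
    rw [Finset.sum_congr rfl fun u _ => s2 u, Finset.sum_comm]
    have s4 : ∀ t : F, ∑ u : F, (if u ≠ 0 ∧ u ^ 3 = t then (1 : ℂ) else 0) * lam (t + 1 / 4)
        = (∑ χ ∈ Finset.univ.filter (fun χ : MulChar F ℂ => χ ^ 3 = 1), χ t)
            * lam (t + 1 / 4) := by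
      intro t
      rw [← Finset.sum_mul, ortho 3 (by norm_num)]
    rw [Finset.sum_congr rfl fun t _ => s4 t,
      Finset.sum_congr rfl fun t _ => Finset.sum_mul _ (fun χ : MulChar F ℂ => χ t) _,
      Finset.sum_comm]
  rw [s1, s3]
  have hmem1 : (1 : MulChar F ℂ) ∈ Finset.univ.filter (fun χ : MulChar F ℂ => χ ^ 3 = 1) := by
    rw [Finset.mem_filter]; exact ⟨Finset.mem_univ _, one_pow 3⟩
  have hsplit := Finset.add_sum_erase
    (Finset.univ.filter (fun χ : MulChar F ℂ => χ ^ 3 = 1))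
    (fun χ : MulChar F ℂ => ∑ t : F, χ t * lam (t + 1 / 4)) hmem1
  have herase : (Finset.univ.filter (fun χ : MulChar F ℂ => χ ^ 3 = 1)).erase 1
      = Finset.univ.filter (fun χ : MulChar F ℂ => χ ^ 3 = 1 ∧ χ ≠ 1) := by
    ext ψ
    rw [Finset.mem_erase, Finset.mem_filter, Finset.mem_filter]
    constructor
    · rintro ⟨hne, -, h3'⟩; exact ⟨Finset.mem_univ _, h3', hne⟩
    · rintro ⟨-, h3', hne⟩; exact ⟨hne, Finset.mem_univ _, h3'⟩
  rw [herase] at hsplit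
  have hone : (∑ t : F, (1 : MulChar F ℂ) t * lam (t + 1 / 4)) = -1 := by
    have hpt : ∀ t : F, (1 : MulChar F ℂ) t * lam (t + 1 / 4)
        = lam (t + 1 / 4) - (if t = 0 then 1 else 0) := by
      intro t
      by_cases h : t = 0
      · subst h
        rw [if_pos rfl, MulChar.map_zero, zero_mul,
          show ((0 : F) + 1 / 4) = (1 : F) / 4 by ring, h14]
        ring
      · rw [if_neg h, MulChar.one_apply (isUnit_iff_ne_zero.mpr h), one_mul]
        ring
    rw [Finset.sum_congr rfl fun t _ => hpt t, Finset.sum_sub_distrib, sum_lam_linear lam hlam]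
    simp
  linear_combination hone - hsplit

end HessianAux

/-- Let `F` be a finite field of characteristic `p ≥ 5` with quadratic character `λ`, and let
`d ≥ 1` be an integer coprime to `|F|` with `3 ∣ d`.  Then
`∑_{τ ∈ F} ∑_{x ∈ F} λ(x³ + x² − 8·τ^d·x + 16·τ^(2d)) + ∑_{x ∈ F} λ(x³ + 1/4)
  = ∑_χ χ(−1)·j_F(χ, χ, χ)`,
where the sum on the right ranges over the nontrivial multiplicative characters `χ` of `F`
with `χ^d = 𝟙` and `χ³ ≠ 𝟙`. -/
theorem charSum_hessian_fibres_with_infty (p : ℕ) (hp : p.Prime) (hp5 : 5 ≤ p)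
    (F : Type*) [Field F] [Fintype F] [DecidableEq F] [CharP F p]
    (lam : MulChar F ℂ) (hlam : orderOf lam = 2)
    (d : ℕ) (hd : 1 ≤ d) (hcop : Nat.Coprime d (Fintype.card F)) (h3 : 3 ∣ d) :
    (∑ τ : F, ∑ x : F,
        lam (x ^ 3 + x ^ 2 - 8 * τ ^ d * x + 16 * τ ^ (2 * d))) +
      ∑ x : F, lam (x ^ 3 + 1 / 4) =
      ∑ᶠ χ ∈ {χ : MulChar F ℂ | χ ≠ 1 ∧ χ ^ d = 1 ∧ χ ^ 3 ≠ 1},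
        χ (-1) * jacobiSum₃ χ χ χ := by
  classical
  letI : Fintype (MulChar F ℂ) := Fintype.ofFinite _
  have hdne : d ≠ 0 := by omega
  have hp2 : (2 : F) ≠ 0 := by
    intro hc
    have h2' : ((2 : ℕ) : F) = 0 := by exact_mod_cast hc
    have hdvd : p ∣ 2 := (CharP.cast_eq_zero_iff F p 2).mp h2'
    have hle := Nat.le_of_dvd (by norm_num) hdvd
    omega
  have hmem1 : (1 : MulChar F ℂ) ∈ Finset.univ.filter (fun χ : MulChar F ℂ => χ ^ 3 = 1) := by
    rw [Finset.mem_filter]; exact ⟨Finset.mem_univ _, one_pow 3⟩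
  have herase : (Finset.univ.filter (fun χ : MulChar F ℂ => χ ^ 3 = 1)).erase 1
      = Finset.univ.filter (fun χ : MulChar F ℂ => χ ^ 3 = 1 ∧ χ ≠ 1) := by
    ext ψ
    rw [Finset.mem_erase, Finset.mem_filter, Finset.mem_filter]
    constructor
    · rintro ⟨hne, -, h3'⟩; exact ⟨Finset.mem_univ _, h3', hne⟩
    · rintro ⟨-, h3', hne⟩; exact ⟨hne, Finset.mem_univ _, h3'⟩
  have hset : {χ : MulChar F ℂ | χ ≠ 1 ∧ χ ^ d = 1 ∧ χ ^ 3 ≠ 1}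
      = ↑(Finset.univ.filter (fun χ : MulChar F ℂ => χ ^ d = 1 ∧ χ ^ 3 ≠ 1)) := by
    ext χ
    simp only [Set.mem_setOf_eq, Finset.coe_filter, Finset.mem_univ, true_and,
      Set.mem_setOf_eq]
    constructor
    · rintro ⟨-, h2', h3'⟩; exact ⟨h2', h3'⟩
    · rintro ⟨h2', h3'⟩
      exact ⟨fun hc => h3' (by rw [hc, one_pow]), h2', h3'⟩
  rw [hset, finsum_mem_coe_finset]
  have hsub : (Finset.univ.filter (fun χ : MulChar F ℂ => χ ^ 3 = 1))
      ⊆ Finset.univ.filter (fun χ : MulChar F ℂ => χ ^ d = 1) := by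
    intro χ hχ
    rw [Finset.mem_filter] at hχ ⊢
    obtain ⟨k, hk⟩ := h3
    exact ⟨Finset.mem_univ _, by rw [hk, pow_mul, hχ.2, one_pow]⟩
  have hsdiff : Finset.univ.filter (fun χ : MulChar F ℂ => χ ^ d = 1 ∧ χ ^ 3 ≠ 1)
      = Finset.univ.filter (fun χ : MulChar F ℂ => χ ^ d = 1)
        \ Finset.univ.filter (fun χ : MulChar F ℂ => χ ^ 3 = 1) := by
    ext χ
    rw [Finset.mem_sdiff, Finset.mem_filter, Finset.mem_filter, Finset.mem_filter]
    constructor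
    · rintro ⟨-, hd', h3'⟩
      exact ⟨⟨Finset.mem_univ _, hd'⟩, fun hc => h3' hc.2⟩
    · rintro ⟨⟨-, hd'⟩, hc⟩
      exact ⟨Finset.mem_univ _, hd', fun hcc => hc ⟨Finset.mem_univ _, hcc⟩⟩
  rw [hsdiff, Finset.sum_sdiff_eq_sub hsub]
  have hSd := char_side lam hlam hp2 d hdne
  have hsplit := Finset.add_sum_erase (Finset.univ.filter (fun χ : MulChar F ℂ => χ ^ 3 = 1))
      (fun χ : MulChar F ℂ => χ (-1) * jacobiSum₃ χ χ χ) hmem1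
  rw [herase] at hsplit
  have hCsum : ∑ χ ∈ Finset.univ.filter (fun χ : MulChar F ℂ => χ ^ 3 = 1 ∧ χ ≠ 1),
      χ (-1) * jacobiSum₃ χ χ χ = - ∑ x : F, lam (x ^ 3 + 1 / 4) := by
    rw [cube_sum lam hlam hp2, ← Finset.sum_neg_distrib]
    refine Finset.sum_congr rfl fun χ hχ => ?_
    obtain ⟨-, h3', hne⟩ := Finset.mem_filter.mp hχ
    exact cubic_char_identity lam hlam hp2 χ h3' hne
  have hone := jacobi_one (F := F)
  have hLHS : ∑ τ : F, ∑ x : F, lam (x ^ 3 + x ^ 2 - 8 * τ ^ d * x + 16 * τ ^ (2 * d))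
      = (∑ u ∈ Finset.univ.filter (fun u : F => u ≠ 0), ∑ v : F,
          lam (v ^ 3 + v ^ 2 - 8 * u ^ d * v + 16 * (u ^ d) ^ 2)) + (-1) := by
    have hexp : ∀ τ x : F, lam (x ^ 3 + x ^ 2 - 8 * τ ^ d * x + 16 * τ ^ (2 * d))
        = lam (x ^ 3 + x ^ 2 - 8 * τ ^ d * x + 16 * (τ ^ d) ^ 2) := by
      intro τ x
      congr 2
      rw [show 2 * d = d * 2 by ring, pow_mul]
    rw [Finset.sum_congr rfl fun τ _ => Finset.sum_congr rfl fun x _ => hexp τ x]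
    refine sum_split_zero _ (-1) ?_
    have h0 : ∀ x : F, lam (x ^ 3 + x ^ 2 - 8 * (0 : F) ^ d * x + 16 * ((0 : F) ^ d) ^ 2)
        = lam (x ^ 3 + x ^ 2) := by
      intro x
      congr 1
      rw [zero_pow hdne]
      ring
    rw [Finset.sum_congr rfl fun x _ => h0 x]
    exact sum_lam_cubeshift lam hlam
  linear_combination hLHS - hSd - hsplit + hone + hCsum
end
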